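/- Under the hypotheses of the main theorem (dense vector subspace V of C(Ω) with f+g having a unique equilibrium state for every g ∈ V), the set of measures that are unique equilibrium states of some function of the form f+g with g ∈ V is dense in M^τ(Ω) for the weak* topology. -/

import Mathlib

open Filter Topology

/-!
Near `μ ∈ M` the weak* topology on `M` is controlled by finitely many test functions, which by
density may be taken in `V`; let `L t` be their combination with coefficients `t`. A minimiser
`t₀` of the coercive function `t ↦ P(f + L t) - μ(L t) + ε ‖t‖` makes every one-sided
derivative of `P` at `f + L t₀` in a direction `L e` at least `μ (L e) - ε ‖e‖`. Because
`f + L t₀` has a unique equilibrium state `ν₀`, equilibrium states depend continuously on the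
potential there, so these derivatives are `ν₀ (L e)`; hence `ν₀` is close to `μ` on the test
functions.
-/

theorem abs_apply_le_norm_of_nonneg_of_map_one {Ω : Type*} [TopologicalSpace Ω] [CompactSpace Ω]
    (ν : WeakDual ℝ C(Ω, ℝ)) (hone : ν 1 = 1)
    (hpos : ∀ g : C(Ω, ℝ), (∀ ω, 0 ≤ g ω) → 0 ≤ ν g) (k : C(Ω, ℝ)) : |ν k| ≤ ‖k‖ := by
  have hk : ∀ ω, |k ω| ≤ ‖k‖ := fun ω => by simpa using k.norm_coe_le_norm ω
  have hupper := hpos (‖k‖ • 1 - k) fun ω =>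
    show 0 ≤ ‖k‖ * 1 - k ω by linarith [(abs_le.1 (hk ω)).2]
  have hlower := hpos (‖k‖ • 1 + k) fun ω =>
    show 0 ≤ ‖k‖ * 1 + k ω by linarith [(abs_le.1 (hk ω)).1]
  simp only [map_sub, map_add, map_smul, hone, smul_eq_mul, mul_one] at hupper hlower
  exact abs_le.2 ⟨by linarith, by linarith⟩

theorem WeakDual.exists_finset_forall_abs_sub_lt_mem {E : Type*} [AddCommGroup E]
    [TopologicalSpace E] [Module ℝ E] {μ : WeakDual ℝ E} {U : Set (WeakDual ℝ E)}
    (hU : U ∈ 𝓝 μ) {ε : ℝ} (hε : 0 < ε) :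
    ∃ s : Finset E, ∀ ν : WeakDual ℝ E, (∀ k ∈ s, |ν k - μ k| < ε) → ν ∈ U := by
  classical
  have hnhds : 𝓝 μ = comap (fun (ν : WeakDual ℝ E) (k : E) => ν k) (𝓝 fun k => μ k) :=
    nhds_induced _ _
  rw [hnhds, nhds_pi] at hU
  obtain ⟨T, hT, hTU⟩ := hU
  obtain ⟨I, hI, t, ht, hIT⟩ := Filter.mem_pi.1 hT
  choose δ hδ hball using fun k => Metric.mem_nhds_iff.1 (ht k)
  refine ⟨hI.toFinset.image fun k => (ε / δ k) • k, fun ν hν => hTU (hIT fun k hk => hball k ?_)⟩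
  have hclose := hν _ (Finset.mem_image_of_mem _ (hI.mem_toFinset.2 hk))
  rw [map_smul, map_smul, smul_eq_mul, smul_eq_mul, ← mul_sub, abs_mul,
    abs_of_pos (div_pos hε (hδ k)), div_mul_eq_mul_div, div_lt_iff₀ (hδ k),
    mul_lt_mul_iff_right₀ hε] at hclose
  rwa [Metric.mem_ball, Real.dist_eq]

theorem Continuous.exists_forall_add_mul_norm_le {F : Type*} [NormedAddCommGroup F] [ProperSpace F]
    {φ : F → ℝ} (hφ : Continuous φ) {B : ℝ} (hB : ∀ x, B ≤ φ x) {ε : ℝ} (hε : 0 < ε) :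
    ∃ x₀, ∀ x, φ x₀ + ε * ‖x₀‖ ≤ φ x + ε * ‖x‖ :=
  (hφ.add (continuous_const.mul continuous_norm)).exists_forall_le
    (tendsto_atTop_add_left_of_le _ B hB (tendsto_norm_cocompact_atTop.const_mul_atTop hε))

section

variable {E : Type*} [NormedAddCommGroup E] [NormedSpace ℝ E]
  {M : Set (WeakDual ℝ E)} {h : WeakDual ℝ E → ℝ}

theorem exists_finset_subset_forall_abs_sub_lt_mem (hM : ∀ ν ∈ M, ∀ k, |ν k| ≤ ‖k‖)
    {μ : WeakDual ℝ E} (hμ : μ ∈ M) {U : Set (WeakDual ℝ E)} (hU : U ∈ 𝓝 μ) {V : Set E}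
    (hV : Dense V) {ε : ℝ} (hε : 0 < ε) :
    ∃ s : Finset E, ↑s ⊆ V ∧ ∀ ν ∈ M, (∀ g ∈ s, |ν g - μ g| < ε) → ν ∈ U := by
  classical
  obtain ⟨s₀, hs₀⟩ := WeakDual.exists_finset_forall_abs_sub_lt_mem hU (by positivity : 0 < 3 * ε)
  choose g hgV hg using fun k => hV.exists_dist_lt k hε
  refine ⟨s₀.image g, by simpa [Set.subset_def] using fun k _ => hgV k,
    fun ν hν hνs => hs₀ ν fun k hk => ?_⟩
  have hνg := hνs (g k) (Finset.mem_image_of_mem g hk)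
  have hν := hM ν hν (k - g k)
  have hμ := hM μ hμ (k - g k)
  rw [map_sub, ← dist_eq_norm] at hν hμ
  rw [abs_lt] at hνg ⊢
  constructor <;> linarith [abs_le.1 hν, abs_le.1 hμ, hg k]

noncomputable def pressure (M : Set (WeakDual ℝ E)) (h : WeakDual ℝ E → ℝ) (g : E) : ℝ :=
  sSup ((fun ν : WeakDual ℝ E => ν g + h ν) '' M)

def IsEquilibriumState (M : Set (WeakDual ℝ E)) (h : WeakDual ℝ E → ℝ) (g : E)
    (ν : WeakDual ℝ E) : Prop :=
  ν ∈ M ∧ ν g + h ν = pressure M h g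

theorem UpperSemicontinuousOn.apply_add (husc : UpperSemicontinuousOn h M) (g : E) :
    UpperSemicontinuousOn (fun ν : WeakDual ℝ E => ν g + h ν) M :=
  (WeakDual.eval_continuous g).continuousOn.upperSemicontinuousOn.add husc

theorem le_pressure (hcomp : IsCompact M) (husc : UpperSemicontinuousOn h M) {ν : WeakDual ℝ E}
    (hν : ν ∈ M) (g : E) : ν g + h ν ≤ pressure M h g :=
  le_csSup ((husc.apply_add g).bddAbove_of_isCompact hcomp) ⟨ν, hν, rfl⟩

theorem pressure_le (hne : M.Nonempty) {g : E} {b : ℝ} (hb : ∀ ν ∈ M, ν g + h ν ≤ b) :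
    pressure M h g ≤ b :=
  csSup_le (hne.image _) (Set.forall_mem_image.2 hb)

theorem exists_isEquilibriumState (hne : M.Nonempty) (hcomp : IsCompact M)
    (husc : UpperSemicontinuousOn h M) (g : E) : ∃ ν, IsEquilibriumState M h g ν := by
  obtain ⟨ν, hν, hmax⟩ := (husc.apply_add g).exists_isMaxOn hne hcomp
  exact ⟨ν, hν, le_antisymm (le_pressure hcomp husc hν g) (pressure_le hne (isMaxOn_iff.1 hmax))⟩

theorem lipschitzWith_pressure (hM : ∀ ν ∈ M, ∀ k, |ν k| ≤ ‖k‖) (hne : M.Nonempty)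
    (hcomp : IsCompact M) (husc : UpperSemicontinuousOn h M) : LipschitzWith 1 (pressure M h) :=
  LipschitzWith.of_le_add fun a b => pressure_le hne fun ν hν => by
    have hb := le_pressure hcomp husc hν b
    have hab := hM ν hν (a - b)
    rw [map_sub, ← dist_eq_norm] at hab
    linarith [le_abs_self (ν a - ν b)]

theorem pressure_sub_le_of_isEquilibriumState (hM : ∀ ν ∈ M, ∀ k, |ν k| ≤ ‖k‖)
    (hcomp : IsCompact M) (husc : UpperSemicontinuousOn h M) {k' : E} {ν : WeakDual ℝ E}
    (hν : IsEquilibriumState M h k' ν) (k : E) : pressure M h k - 2 * dist k' k ≤ ν k + h ν := by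
  have hP := (lipschitzWith_pressure hM ⟨ν, hν.1⟩ hcomp husc).dist_le_mul k k'
  have hνk := hM ν hν.1 (k' - k)
  rw [map_sub, ← dist_eq_norm] at hνk
  rw [NNReal.coe_one, one_mul, Real.dist_eq, dist_comm] at hP
  linarith [le_abs_self (ν k' - ν k), le_abs_self (pressure M h k - pressure M h k'), hν.2]

theorem exists_pos_mem_of_pressure_sub_lt (hcomp : IsCompact M)
    (husc : UpperSemicontinuousOn h M) {k : E} {ν₀ : WeakDual ℝ E}
    (huniq : ∀ ν, IsEquilibriumState M h k ν → ν = ν₀) {W : Set (WeakDual ℝ E)} (hW : W ∈ 𝓝 ν₀) :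
    ∃ δ > 0, ∀ ν ∈ M, pressure M h k - δ < ν k + h ν → ν ∈ W := by
  obtain ⟨O, hOW, hO, hν₀O⟩ := mem_nhds_iff.1 hW
  rcases (M \ O).eq_empty_or_nonempty with hempty | hne
  · exact ⟨1, one_pos, fun ν hν _ => hOW (by_contra fun hνO => hempty.subset ⟨hν, hνO⟩)⟩
  -- the sup of `ν k + h ν` over the compact set `M \ O` is attained, hence below `pressure M h k`
  obtain ⟨ν₁, hν₁, hmax⟩ := ((husc.apply_add k).mono Set.sdiff_subset).exists_isMaxOn hne
    (hcomp.diff hO)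
  have hlt : ν₁ k + h ν₁ < pressure M h k :=
    (le_pressure hcomp husc hν₁.1 k).lt_of_ne fun heq => hν₁.2 (huniq ν₁ ⟨hν₁.1, heq⟩ ▸ hν₀O)
  refine ⟨_, sub_pos.2 hlt, fun ν hν hνk => hOW (by_contra fun hνO => ?_)⟩
  linarith [isMaxOn_iff.1 hmax ν ⟨hν, hνO⟩]

theorem eventually_forall_isEquilibriumState_mem (hM : ∀ ν ∈ M, ∀ k, |ν k| ≤ ‖k‖)
    (hcomp : IsCompact M) (husc : UpperSemicontinuousOn h M) {k : E} {ν₀ : WeakDual ℝ E}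
    (huniq : ∀ ν, IsEquilibriumState M h k ν → ν = ν₀) {W : Set (WeakDual ℝ E)} (hW : W ∈ 𝓝 ν₀) :
    ∀ᶠ k' in 𝓝 k, ∀ ν, IsEquilibriumState M h k' ν → ν ∈ W := by
  obtain ⟨δ, hδ, hδW⟩ := exists_pos_mem_of_pressure_sub_lt hcomp husc huniq hW
  refine Metric.eventually_nhds_iff.2 ⟨δ / 2, half_pos hδ, fun k' hk' ν hν => hδW ν hν.1 ?_⟩
  linarith [pressure_sub_le_of_isEquilibriumState hM hcomp husc hν k]

theorem le_apply_of_forall_pressure_le (hM : ∀ ν ∈ M, ∀ k, |ν k| ≤ ‖k‖) (hne : M.Nonempty)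
    (hcomp : IsCompact M) (husc : UpperSemicontinuousOn h M) {k u : E} {ν₀ : WeakDual ℝ E}
    (huniq : ∀ ν, IsEquilibriumState M h k ν → ν = ν₀) {c : ℝ}
    (hc : ∀ r > 0, pressure M h k + r * c ≤ pressure M h (k + r • u)) : c ≤ ν₀ u := by
  by_contra! hlt
  have hW : {ν : WeakDual ℝ E | ν u < c} ∈ 𝓝 ν₀ :=
    (isOpen_lt (WeakDual.eval_continuous u) continuous_const).mem_nhds hlt
  have hlim : Tendsto (fun r : ℝ => k + r • u) (𝓝[>] 0) (𝓝 k) :=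
    ((continuous_const.add (continuous_id.smul continuous_const)).tendsto' 0 k
      (by simp)).mono_left nhdsWithin_le_nhds
  obtain ⟨r, hrW, hr⟩ := ((hlim.eventually (eventually_forall_isEquilibriumState_mem hM hcomp
    husc huniq hW)).and self_mem_nhdsWithin).exists
  obtain ⟨ν, hν⟩ := exists_isEquilibriumState hne hcomp husc (k + r • u)
  have hνu : ν u < c := hrW ν hν
  -- `ν` tests `pressure` at `k + r • u` and is a competitor at `k`, so `r * c ≤ r * ν u`
  have hνk := le_pressure hcomp husc hν.1 k
  have hνP := hν.2
  rw [map_add, map_smul, smul_eq_mul] at hνP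
  nlinarith [hc r hr, mul_pos (Set.mem_Ioi.1 hr) (sub_pos.2 hνu)]

variable {F : Type*} [NormedAddCommGroup F] [NormedSpace ℝ F]

theorem sub_mul_norm_le_apply_of_forall_le (hM : ∀ ν ∈ M, ∀ k, |ν k| ≤ ‖k‖) (hne : M.Nonempty)
    (hcomp : IsCompact M) (husc : UpperSemicontinuousOn h M) {μ ν₀ : WeakDual ℝ E}
    {L : F →L[ℝ] E} {f : E} {t₀ : F} {ε : ℝ} (hε : 0 < ε)
    (hmin : ∀ t, pressure M h (f + L t₀) - μ (L t₀) + ε * ‖t₀‖ ≤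
      pressure M h (f + L t) - μ (L t) + ε * ‖t‖)
    (huniq : ∀ ν, IsEquilibriumState M h (f + L t₀) ν → ν = ν₀) (e : F) :
    μ (L e) - ε * ‖e‖ ≤ ν₀ (L e) := by
  refine le_apply_of_forall_pressure_le hM hne hcomp husc huniq fun r hr => ?_
  have hmin_r := hmin (t₀ + r • e)
  have hnorm : ε * ‖t₀ + r • e‖ ≤ ε * (‖t₀‖ + r * ‖e‖) := by
    gcongr
    exact (norm_add_le _ _).trans_eq (by rw [norm_smul, Real.norm_of_nonneg hr.le])
  rw [map_add, map_smul, ← add_assoc, map_add, map_smul, smul_eq_mul] at hmin_r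
  linarith

theorem exists_forall_isEquilibriumState_abs_sub_le [ProperSpace F]
    (hM : ∀ ν ∈ M, ∀ k, |ν k| ≤ ‖k‖) (hcomp : IsCompact M) (husc : UpperSemicontinuousOn h M)
    {μ : WeakDual ℝ E} (hμ : μ ∈ M) (L : F →L[ℝ] E) (f : E)
    (huniq : ∀ t, ∃! ν, IsEquilibriumState M h (f + L t) ν) {ε : ℝ} (hε : 0 < ε) :
    ∃ t, ∀ ν₀, IsEquilibriumState M h (f + L t) ν₀ → ∀ e, |ν₀ (L e) - μ (L e)| ≤ ε * ‖e‖ := by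
  have hne : M.Nonempty := ⟨μ, hμ⟩
  have hcont : Continuous fun t => pressure M h (f + L t) - μ (L t) :=
    ((lipschitzWith_pressure hM hne hcomp husc).continuous.comp
      (continuous_const.add L.continuous)).sub (μ.continuous.comp L.continuous)
  have hbdd : ∀ t, μ f + h μ ≤ pressure M h (f + L t) - μ (L t) := fun t => by
    linarith [le_pressure hcomp husc hμ (f + L t), map_add μ f (L t)]
  obtain ⟨t₀, hmin⟩ := hcont.exists_forall_add_mul_norm_le hbdd hε
  refine ⟨t₀, fun ν₀ hν₀ e => ?_⟩
  have hbound := sub_mul_norm_le_apply_of_forall_le hM hne hcomp husc hε hmin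
    fun ν hν => (huniq t₀).unique hν hν₀
  refine abs_le.2 ⟨?_, ?_⟩
  · linarith [hbound e]
  · have hneg := hbound (-e)
    rw [map_neg, map_neg, map_neg, norm_neg] at hneg
    linarith

end

theorem stmt14_general {Ω : Type} [TopologicalSpace Ω] [CompactSpace Ω]
    (M : Set (WeakDual ℝ C(Ω, ℝ))) (hcomp : IsCompact M)
    (hprob : ∀ μ ∈ M, μ (1 : C(Ω, ℝ)) = 1 ∧ ∀ g : C(Ω, ℝ), (∀ ω, 0 ≤ g ω) → 0 ≤ μ g)
    (h : WeakDual ℝ C(Ω, ℝ) → ℝ)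
    (husc : UpperSemicontinuousOn h M)
    (P : C(Ω, ℝ) → ℝ)
    (hP : ∀ g : C(Ω, ℝ), P g = sSup ((fun μ : WeakDual ℝ C(Ω, ℝ) => μ g + h μ) '' M))
    (f : C(Ω, ℝ))
    (V : Submodule ℝ C(Ω, ℝ)) (hV : Dense (V : Set C(Ω, ℝ)))
    (huniq : ∀ g ∈ V, ∃! μ : WeakDual ℝ C(Ω, ℝ),
      μ ∈ M ∧ μ (f + g) + h μ = P (f + g)) :
    M ⊆ closure {ν : WeakDual ℝ C(Ω, ℝ) | ∃ g ∈ V, ν ∈ M ∧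
      ν (f + g) + h ν = P (f + g) ∧
      ∀ ν' ∈ M, ν' (f + g) + h ν' = P (f + g) → ν' = ν} := by
  obtain rfl : P = pressure M h := funext hP
  have hM : ∀ ν ∈ M, ∀ k, |ν k| ≤ ‖k‖ := fun ν hν =>
    abs_apply_le_norm_of_nonneg_of_map_one ν (hprob ν hν).1 (hprob ν hν).2
  intro μ hμ
  refine mem_closure_iff_nhds.2 fun U hU => ?_
  obtain ⟨s, hsV, hsU⟩ := exists_finset_subset_forall_abs_sub_lt_mem hM hμ hU hV one_pos
  let L : (s → ℝ) →L[ℝ] C(Ω, ℝ) :=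
    LinearMap.toContinuousLinearMap (Fintype.linearCombination ℝ ((↑) : s → C(Ω, ℝ)))
  have hLV : ∀ t, L t ∈ V := fun t => Submodule.sum_mem _ fun g _ => V.smul_mem _ (hsV g.2)
  obtain ⟨t, ht⟩ := exists_forall_isEquilibriumState_abs_sub_le hM hcomp husc hμ L f
    (fun t => huniq _ (hLV t)) (half_pos one_pos)
  obtain ⟨ν₀, hν₀, hν₀uniq⟩ := huniq _ (hLV t)
  refine ⟨ν₀, hsU ν₀ hν₀.1 fun g hg => ?_, L t, hLV t, hν₀.1, hν₀.2,
    fun ν hν hνP => hν₀uniq ν ⟨hν, hνP⟩⟩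
  classical
  have hclose := ht ν₀ hν₀ (Pi.single ⟨g, hg⟩ 1)
  simp only [L, LinearMap.coe_toContinuousLinearMap', Fintype.linearCombination_apply_single,
    one_smul, Pi.norm_single, norm_one, mul_one] at hclose
  linarith

/-- Under the hypotheses of the main theorem, the set of measures that are unique equilibrium
states of some `f + g` with `g ∈ V` is dense in `M = M^τ(Ω)` for the weak* topology. -/
theorem stmt14 {Ω : Type} [TopologicalSpace Ω] [CompactSpace Ω]
    [TopologicalSpace.MetrizableSpace Ω] [Nonempty Ω]
    (M : Set (WeakDual ℝ C(Ω, ℝ))) (hne : M.Nonempty) (hcomp : IsCompact M)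
    (hconv : Convex ℝ M)
    (hprob : ∀ μ ∈ M, μ (1 : C(Ω, ℝ)) = 1 ∧ ∀ g : C(Ω, ℝ), (∀ ω, 0 ≤ g ω) → 0 ≤ μ g)
    (h : WeakDual ℝ C(Ω, ℝ) → ℝ)
    (hbdd : ∃ C : ℝ, ∀ μ ∈ M, |h μ| ≤ C)
    (haff : ∀ μ ∈ M, ∀ ν ∈ M, ∀ a b : ℝ, 0 ≤ a → 0 ≤ b → a + b = 1 →
      h (a • μ + b • ν) = a * h μ + b * h ν)
    (husc : UpperSemicontinuousOn h M)
    (P : C(Ω, ℝ) → ℝ)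
    (hP : ∀ g : C(Ω, ℝ), P g = sSup ((fun μ : WeakDual ℝ C(Ω, ℝ) => μ g + h μ) '' M))
    (f : C(Ω, ℝ))
    (V : Submodule ℝ C(Ω, ℝ)) (hV : Dense (V : Set C(Ω, ℝ)))
    (huniq : ∀ g ∈ V, ∃! μ : WeakDual ℝ C(Ω, ℝ),
      μ ∈ M ∧ μ (f + g) + h μ = P (f + g)) :
    M ⊆ closure {ν : WeakDual ℝ C(Ω, ℝ) | ∃ g ∈ V, ν ∈ M ∧
      ν (f + g) + h ν = P (f + g) ∧
      ∀ ν' ∈ M, ν' (f + g) + h ν' = P (f + g) → ν' = ν} :=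
  stmt14_general M hcomp hprob h husc P hP f V hV huniq
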